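/- Fix λ ∈ (0, λ₀). There exist a constant K₇(λ) > 0 and for each r ∈ ℕ a threshold S(λ,r) ∈ ℕ, depending only on d, M₀, M₁, λ (and r), such that whenever the pair (m₁,m₂) is (λ,r)-good for ω, m₂ − m₁ > S(λ,r), and y ∈ ℤ^d with |y| ≤ r: Σ_{x : |x| > r} Z_{m₁,m₂}(x,y) ≤ K₇(λ)·e^{−2λ₀ r}·Z_{m₁,m₂}(0,y). -/

import Mathlib

open MeasureTheory Filter

namespace BKpaper

abbrev X (d : ℕ) := Fin d → ℤ

/-- the max-norm |x| = max_i |x_i|, as a natural number -/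
def nm {d : ℕ} (x : X d) : ℕ := Finset.univ.sup fun i => (x i).natAbs

/-- spin value of a boolean: `true ↦ 1`, `false ↦ -1` -/
def sgn (b : Bool) : ℝ := if b then 1 else -1

/-- ξ_m(ω) = M₀ if ω_m = 1, ξ_m(ω) = −M₁ if ω_m = −1 -/
def xi (M₀ M₁ : ℝ) (ω : ℤ → Bool) (m : ℤ) : ℝ := if ω m then M₀ else -M₁

/-- one admissible step of the lazy random walk -/
def stepOK {d : ℕ} (x y : X d) : Prop := (∑ i, (y i - x i).natAbs) ≤ 1

/-- admissible path on the (discrete) interval [n₁, n₂] -/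
def Adm {d : ℕ} (n₁ n₂ : ℤ) (γ : ℤ → X d) : Prop :=
  ∀ n : ℤ, n₁ ≤ n → n < n₂ → stepOK (γ n) (γ (n + 1))

/-- a path frozen outside [n₁,n₂]; used to represent a path on [n₁,n₂] by a
function on all of ℤ -/
def Frozen {d : ℕ} (n₁ n₂ : ℤ) (γ : ℤ → X d) : Prop :=
  (∀ n : ℤ, n ≤ n₁ → γ n = γ n₁) ∧ (∀ n : ℤ, n₂ ≤ n → γ n = γ n₂)

/-- Φ_{n₁,n₂}(γ,ω) = Σ_{n=n₁+1}^{n₂} V(γ(n)) ω_n -/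
noncomputable def Phi {d : ℕ} (V : X d → ℝ) (ω : ℤ → Bool) (n₁ n₂ : ℤ) (γ : ℤ → X d) : ℝ :=
  ∑ n ∈ Finset.Icc (n₁ + 1) n₂, V (γ n) * sgn (ω n)

/-- the Feynman–Kac operator T^{n₁,n₂}(ω) -/
noncomputable def T {d : ℕ} (V : X d → ℝ) (ω : ℤ → Bool) (n₁ n₂ : ℤ)
    (u : X d → ℝ) (x : X d) : ℝ :=
  ((2 * (d : ℝ) + 1) ^ (n₂ - n₁))⁻¹ *
    ∑' γ : {γ : ℤ → X d // Adm n₁ n₂ γ ∧ Frozen n₁ n₂ γ ∧ γ n₂ = x},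
      Real.exp (Phi V ω n₁ n₂ γ.1) * u (γ.1 n₁)

/-- the partition function Z_{n₁,n₂}(x₁,x₂) -/
noncomputable def Z {d : ℕ} (V : X d → ℝ) (ω : ℤ → Bool) (n₁ n₂ : ℤ) (x₁ x₂ : X d) : ℝ :=
  ∑' γ : {γ : ℤ → X d // Adm n₁ n₂ γ ∧ Frozen n₁ n₂ γ ∧ γ n₁ = x₁ ∧ γ n₂ = x₂},
    Real.exp (Phi V ω n₁ n₂ γ.1)

/-- the class F(c): nonnegative bounded functions with sup φ ≤ c·φ(0) -/
def Fset (d : ℕ) (c : ℝ) : Set (X d → ℝ) :=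
  {φ | (∀ x, 0 ≤ φ x) ∧ ∀ x, φ x ≤ c * φ 0}

/-- P is the i.i.d. Bernoulli(1/2) product measure on {−1,1}^ℤ ≃ ℤ → Bool -/
def IsBernoulli (P : Measure (ℤ → Bool)) : Prop :=
  IsProbabilityMeasure P ∧ ∀ (s : Finset ℤ) (f : ℤ → Bool),
    P {ω | ∀ i ∈ s, ω i = f i} = (1 / 2 : ENNReal) ^ s.card

/-- the shift θ^k -/
def shift (k : ℤ) (ω : ℤ → Bool) : ℤ → Bool := fun n => ω (k + n)

/-- first standard basis vector e₁ of ℤ^d -/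
def e1 (d : ℕ) : X d := fun i => if (i : ℕ) = 0 then 1 else 0

/-- the optimal path γ*: γ*_n = 0 if ω_n = 1, γ*_n = e₁ if ω_n = −1 -/
def gstar (d : ℕ) (ω : ℤ → Bool) : ℤ → X d := fun n => if ω n then 0 else e1 d

/-- the pair (m₁,m₂) is (λ,r)-good for ω -/
def Good (d : ℕ) (M₀ M₁ lam : ℝ) (r : ℕ) (m₁ m₂ : ℤ) (ω : ℤ → Bool) : Prop :=
  m₁ < m₂ ∧
  (∀ j : ℤ, m₁ + 1 ≤ j → j ≤ m₁ + r → ω j = true) ∧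
  (∀ k : ℕ, 1 ≤ k →
    (k : ℝ) * (M₁ + lam + Real.log (2 * (d : ℝ) + 1)) <
      ∑ j ∈ Finset.Icc (m₁ + r + 1) (m₁ + r + k), xi M₀ M₁ ω j) ∧
  (∀ j : ℤ, m₂ - r + 1 ≤ j → j ≤ m₂ → ω j = true) ∧
  (∀ k : ℕ, 1 ≤ k →
    (k : ℝ) * (M₁ + lam + Real.log (2 * (d : ℝ) + 1)) <
      ∑ j ∈ Finset.Icc (m₂ - r - k + 1) (m₂ - r), xi M₀ M₁ ω j)

/-- the ball B_r ⊆ ℤ^d as a finite set -/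
noncomputable def ball (d r : ℕ) : Finset (X d) := Fintype.piFinset fun _ => Finset.Icc (-(r : ℤ)) (r : ℤ)

lemma ball_nonempty (d r : ℕ) : (ball d r).Nonempty :=
  ⟨fun _ => 0, by simp [ball, Fintype.mem_piFinset]⟩

/-- the Hilbert projective (pseudo)metric ρ_r on functions restricted to B_r -/
noncomputable def rho (d r : ℕ) (φ ψ : X d → ℝ) : ℝ :=
  Real.log ((ball d r).sup' (ball_nonempty d r) (fun x => φ x / ψ x) *
            (ball d r).sup' (ball_nonempty d r) (fun x => ψ x / φ x))

/-- diam_r of a set of functions w.r.t. ρ_r -/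
noncomputable def diamr (d r : ℕ) (A : Set (X d → ℝ)) : ℝ :=
  sSup {y | ∃ φ ∈ A, ∃ ψ ∈ A, y = rho d r φ ψ}

/-- the set G(λ,r) (with K₁ explicit): φ ∈ F(2K₁) with sup_{|x|>r} φ ≤ sup_{|x|≤r} φ -/
def Gset (d : ℕ) (K₁ : ℝ) (r : ℕ) : Set (X d → ℝ) :=
  {φ | φ ∈ Fset d (2 * K₁) ∧ ∀ x, r < nm x → ∃ z, nm z ≤ r ∧ φ x ≤ φ z}

/-- the set H(λ,r) (with K₁, K₂ explicit) -/
def Hset (d : ℕ) (K₁ K₂ : ℝ) (r : ℕ) : Set (X d → ℝ) :=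
  {φ | φ ∈ Gset d K₁ r ∧ (⨆ x, φ x) = 1 ∧ ∀ y, nm y ≤ r → 1 / K₂ ≤ φ y}

/-- finite-volume Gibbs measure on [n₁,n₂] for ω (paths represented as
functions ℤ → ℤ^d frozen outside [n₁,n₂]) -/
def FVGibbs (d : ℕ) (V : X d → ℝ) (ω : ℤ → Bool) (n₁ n₂ : ℤ)
    (μ : Measure (ℤ → X d)) : Prop :=
  IsProbabilityMeasure μ ∧
  μ {γ | Adm n₁ n₂ γ ∧ Frozen n₁ n₂ γ} = 1 ∧
  ∀ γ : ℤ → X d, Adm n₁ n₂ γ →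
    μ {α | α n₁ = γ n₁ ∧ α n₂ = γ n₂} ≠ 0 →
    μ {α | ∀ n : ℤ, n₁ ≤ n → n ≤ n₂ → α n = γ n} =
      ENNReal.ofReal (Real.exp (Phi V ω n₁ n₂ γ) / Z V ω n₁ n₂ (γ n₁) (γ n₂)) *
        μ {α | α n₁ = γ n₁ ∧ α n₂ = γ n₂}

/-- (infinite-volume) Gibbs measure for ω -/
def GibbsMeasure (d : ℕ) (V : X d → ℝ) (ω : ℤ → Bool) (μ : Measure (ℤ → X d)) : Prop :=
  IsProbabilityMeasure μ ∧
  μ {α | ∀ n : ℤ, stepOK (α n) (α (n + 1))} = 1 ∧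
  ∀ n₁ n₂ : ℤ, n₁ < n₂ → ∀ γ : ℤ → X d, Adm n₁ n₂ γ →
    μ {α | α n₁ = γ n₁ ∧ α n₂ = γ n₂} ≠ 0 →
    μ {α | ∀ n : ℤ, n₁ ≤ n → n ≤ n₂ → α n = γ n} =
      ENNReal.ofReal (Real.exp (Phi V ω n₁ n₂ γ) / Z V ω n₁ n₂ (γ n₁) (γ n₂)) *
        μ {α | α n₁ = γ n₁ ∧ α n₂ = γ n₂}

/-- the weak localization condition for a measure on two-sided paths -/
def WeakLoc (d : ℕ) (μ : Measure (ℤ → X d)) : Prop :=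
  ∀ ε : ℝ, 0 < ε → ∃ r : ℕ,
    Filter.liminf (fun n : ℤ => μ {α | r < nm (α n)}) Filter.atTop < ENNReal.ofReal ε ∧
    Filter.liminf (fun n : ℤ => μ {α | r < nm (α n)}) Filter.atBot < ENNReal.ofReal ε

/-- normalized positive eigenfunction of the cocycle T -/
def IsEigen (d : ℕ) (V : X d → ℝ) (P : Measure (ℤ → Bool))
    (u : (ℤ → Bool) → X d → ℝ) : Prop :=
  (∀ x : X d, Measurable fun ω => u ω x) ∧
  ∀ᵐ ω ∂P, (∀ x, 0 < u ω x) ∧ BddAbove (Set.range (u ω)) ∧ (⨆ x, u ω x) = 1 ∧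
    ∃ κ : ℝ, 0 < κ ∧ ∀ x, T V ω 0 1 (u ω) x = κ * u (shift 1 ω) x

/-!
A path from outside `B_r` to `y` either meets the optimal path `γ*` or never does. Suppose it
first meets `γ*` after `k` steps; then `k ≥ r`, because `γ* = 0` during the first `r` steps of a
good pair. Before meeting, the path earns at most `M₁` per step, whereas `γ*` earns at least
`r M₀ + (k - r)(M₁ + λ + log(2d+1))` over those `k` steps. Following `γ*` up to the meeting
point therefore gives a path from `0` to `y` that is heavier by a factor
`e^{r (M₀ - M₁) + (k - r)(λ + log(2d+1))}`, and the original path is recovered from it and its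
first `k + 1` steps, each one of `2d + 1` possibilities; summing over `k` leaves a geometric
series of ratio `e^{-λ}`. A path that never meets `γ*` is compared in the same way with the
single path that follows `γ*` and then walks straight to `y`; once `m₂ - m₁` is large, the cost
of that final walk is absorbed. Both contributions carry the factor
`e^{r (log(2d+1) + M₁ - M₀)} ≤ e^{-2λ₀ r}`.
-/

open scoped ENNReal

section Development

variable {d : ℕ}

def l1 (v : X d) : ℕ := ∑ i, (v i).natAbs

lemma l1_zero : l1 (0 : X d) = 0 := by simp [l1]

lemma l1_neg (v : X d) : l1 (-v) = l1 v := by simp [l1]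

lemma nm_le_l1 (v : X d) : nm v ≤ l1 v :=
  Finset.sup_le fun i _ =>
    Finset.single_le_sum (f := fun j => (v j).natAbs) (fun _ _ => Nat.zero_le _) (Finset.mem_univ i)

lemma l1_le_mul_nm (v : X d) : l1 v ≤ d * nm v := by
  simpa [l1, nm] using Finset.sum_le_card_nsmul Finset.univ (fun i => (v i).natAbs) (nm v)
    fun i _ => Finset.le_sup (f := fun j => (v j).natAbs) (Finset.mem_univ i)

lemma stepOK_iff {x y : X d} : stepOK x y ↔ l1 (y - x) ≤ 1 := Iff.rfl

lemma Adm.l1_sub_le {n₁ n₂ : ℤ} {γ : ℤ → X d} (hA : Adm n₁ n₂ γ) {a : ℤ} (ha : n₁ ≤ a) :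
    ∀ b, a ≤ b → b ≤ n₂ → (l1 (γ b - γ a) : ℤ) ≤ b - a := by
  refine Int.leInduction (by simp [l1_zero]) fun b hab ih hb => ?_
  have hstep : l1 (γ (b + 1) - γ b) ≤ 1 := hA b (by omega) (by omega)
  have htri : l1 (γ (b + 1) - γ a) ≤ l1 (γ (b + 1) - γ b) + l1 (γ b - γ a) := by
    simpa [l1, ← Finset.sum_add_distrib] using Finset.sum_le_sum fun i _ =>
      Int.natAbs_add_le (γ (b + 1) i - γ b i) (γ b i - γ a i)
  have := ih (by omega)
  omega

abbrev Step (d : ℕ) := Option (Fin d × Bool)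

lemma card_step : Fintype.card (Step d) = 2 * d + 1 := by
  simp only [Fintype.card_option, Fintype.card_prod, Fintype.card_fin, Fintype.card_bool]
  ring

def Step.vec : Step d → X d
  | none => 0
  | some (i, b) => Pi.single i (if b then 1 else -1)

lemma exists_step_vec_eq {v : X d} (hv : l1 v ≤ 1) : ∃ s : Step d, s.vec = v := by
  classical
  by_cases h0 : v = 0
  · exact ⟨none, h0.symm⟩
  obtain ⟨i, hi⟩ : ∃ i, v i ≠ 0 := by
    by_contra! h
    exact h0 (funext h)
  have hsplit := Finset.add_sum_erase Finset.univ (fun j => (v j).natAbs) (Finset.mem_univ i)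
  have hrest : ∀ j, j ≠ i → v j = 0 := fun j hj => by
    have := Finset.single_le_sum (f := fun j => (v j).natAbs) (fun _ _ => Nat.zero_le _)
      (Finset.mem_erase.2 ⟨hj, Finset.mem_univ j⟩)
    simp only [l1] at hv
    omega
  refine ⟨some (i, decide (0 < v i)), funext fun j => ?_⟩
  by_cases hj : j = i
  · subst hj
    have h1 : (v j).natAbs = 1 := by
      simp only [l1] at hv
      omega
    rcases Int.natAbs_eq_iff.1 h1 with h | h <;> simp [Step.vec, h]
  · simp [Step.vec, hj, hrest j hj]

noncomputable def Step.ofVec : X d → Step d := Function.invFun Step.vec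

lemma Step.vec_ofVec {v : X d} (hv : l1 v ≤ 1) : (Step.ofVec v).vec = v :=
  Function.invFun_eq (exists_step_vec_eq hv)

lemma eq_of_increments_eq {G : Type*} [AddGroup G] {f g : ℤ → G} {a t : ℤ}
    (hf : ∀ n ≤ a, f n = f a) (hg : ∀ n ≤ a, g n = g a)
    (hstep : ∀ n, a ≤ n → n < t → f (n + 1) - f n = g (n + 1) - g n)
    (htail : ∀ n, t ≤ n → f n = g n) : f = g := by
  have hmid : ∀ n ≤ t, a ≤ n → f n = g n := by
    refine Int.leInductionDown (fun _ => htail t le_rfl) fun n hn ih ha => ?_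
    have h := hstep (n - 1) ha (by omega)
    rw [sub_add_cancel, ih (by omega)] at h
    exact sub_right_injective h
  funext n
  rcases le_or_gt t n with htn | htn
  · exact htail n htn
  rcases le_or_gt a n with han | han
  · exact hmid n htn.le han
  rw [hf n han.le, hg n han.le]
  rcases le_or_gt t a with hta | hta
  · exact htail a hta
  · exact hmid a hta.le le_rfl

noncomputable def stepCodes (γ : ℤ → X d) (m : ℤ) (n : ℕ) : Fin n → Step d :=
  fun i => Step.ofVec (γ (m + i + 1) - γ (m + i))

lemma eq_of_stepCodes_eq {γ₁ γ₂ : ℤ → X d} {m : ℤ} {n : ℕ}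
    (hF₁ : ∀ k ≤ m, γ₁ k = γ₁ m) (hF₂ : ∀ k ≤ m, γ₂ k = γ₂ m)
    (hA₁ : Adm m (m + n) γ₁) (hA₂ : Adm m (m + n) γ₂)
    (hcode : stepCodes γ₁ m n = stepCodes γ₂ m n)
    (htail : ∀ k, m + n ≤ k → γ₁ k = γ₂ k) : γ₁ = γ₂ := by
  refine eq_of_increments_eq hF₁ hF₂ (fun k hmk hkn => ?_) htail
  have hcode_k := congrArg Step.vec (congrFun hcode ⟨(k - m).toNat, by omega⟩)
  have hk : m + ((k - m).toNat : ℕ) = k := by omega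
  simp only [stepCodes, hk] at hcode_k
  rwa [Step.vec_ofVec (v := γ₁ (k + 1) - γ₁ k) (hA₁ k hmk hkn),
    Step.vec_ofVec (v := γ₂ (k + 1) - γ₂ k) (hA₂ k hmk hkn)] at hcode_k

abbrev Paths (m₁ m₂ : ℤ) (a b : X d) : Type :=
  {γ : ℤ → X d // Adm m₁ m₂ γ ∧ Frozen m₁ m₂ γ ∧ γ m₁ = a ∧ γ m₂ = b}

instance Paths.finite (m₁ m₂ : ℤ) (a b : X d) : Finite (Paths m₁ m₂ a b) := by
  refine Finite.of_injective (fun γ : Paths m₁ m₂ a b => stepCodes γ.1 m₁ (m₂ - m₁).toNat)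
    fun γ δ h => Subtype.ext ?_
  obtain ⟨hAγ, hFγ, -, hγb⟩ := γ.2
  obtain ⟨hAδ, hFδ, -, hδb⟩ := δ.2
  refine eq_of_stepCodes_eq hFγ.1 hFδ.1 (fun k h1 h2 => hAγ k h1 (by omega))
    (fun k h1 h2 => hAδ k h1 (by omega)) h fun k hk => ?_
  rw [hFγ.2 k (by omega), hFδ.2 k (by omega), hγb, hδb]

noncomputable def weight (V : X d → ℝ) (ω : ℤ → Bool) (m₁ m₂ : ℤ) (γ : ℤ → X d) : ℝ≥0∞ :=
  ENNReal.ofReal (Real.exp (Phi V ω m₁ m₂ γ))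

lemma ofReal_Z (V : X d → ℝ) (ω : ℤ → Bool) (m₁ m₂ : ℤ) (a b : X d) :
    ENNReal.ofReal (Z V ω m₁ m₂ a b) = ∑' γ : Paths m₁ m₂ a b, weight V ω m₁ m₂ γ.1 :=
  ENNReal.ofReal_tsum_of_nonneg (fun _ => (Real.exp_pos _).le) Summable.of_finite

lemma weight_le_of_Phi_le {V : X d → ℝ} {ω : ℤ → Bool} {m₁ m₂ : ℤ} {γ δ : ℤ → X d} {c : ℝ}
    (h : Phi V ω m₁ m₂ γ ≤ c + Phi V ω m₁ m₂ δ) :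
    weight V ω m₁ m₂ γ ≤ ENNReal.ofReal (Real.exp c) * weight V ω m₁ m₂ δ := by
  rw [weight, weight, ← ENNReal.ofReal_mul (Real.exp_pos _).le, ← Real.exp_add]
  exact ENNReal.ofReal_le_ofReal (Real.exp_le_exp.2 h)

lemma tsum_le_mul_Z_of_injective {V : X d → ℝ} {ω : ℤ → Bool} {m₁ m₂ : ℤ} {a b : X d}
    {ι : Type*} {n : ℕ} {w : ι → ℝ≥0∞} {c : ℝ}
    (F : ι → Paths m₁ m₂ a b × (Fin n → Step d)) (hF : Function.Injective F)
    (hw : ∀ i, w i ≤ ENNReal.ofReal (Real.exp c) * weight V ω m₁ m₂ (F i).1.1) :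
    ∑' i, w i ≤ ENNReal.ofReal ((2 * d + 1) ^ n * Real.exp c * Z V ω m₁ m₂ a b) := by
  calc ∑' i, w i
      ≤ ∑' i, ENNReal.ofReal (Real.exp c) * weight V ω m₁ m₂ (F i).1.1 := ENNReal.tsum_le_tsum hw
    _ ≤ ∑' p : Paths m₁ m₂ a b × (Fin n → Step d),
          ENNReal.ofReal (Real.exp c) * weight V ω m₁ m₂ p.1.1 :=
        ENNReal.tsum_comp_le_tsum_of_injective hF
          (fun p => ENNReal.ofReal (Real.exp c) * weight V ω m₁ m₂ p.1.1)
    _ = ENNReal.ofReal ((2 * d + 1) ^ n * Real.exp c * Z V ω m₁ m₂ a b) := by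
        rw [ENNReal.tsum_prod']
        simp only [tsum_fintype, Finset.sum_const, Finset.card_univ, Fintype.card_fun,
          Fintype.card_fin, card_step, nsmul_eq_mul]
        rw [ENNReal.tsum_mul_left, ENNReal.tsum_mul_left, ← ofReal_Z,
          ENNReal.ofReal_mul (by positivity), ENNReal.ofReal_mul (by positivity)]
        norm_cast
        simp [mul_assoc]

lemma sum_Icc_add_one_consecutive (f : ℤ → ℝ) {a b c : ℤ} (hab : a ≤ b) (hbc : b ≤ c) :
    ∑ n ∈ Finset.Icc (a + 1) c, f n =
      ∑ n ∈ Finset.Icc (a + 1) b, f n + ∑ n ∈ Finset.Icc (b + 1) c, f n := by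
  simp only [Finset.Icc_add_one_left_eq_Ioc]
  rw [← Finset.Ioc_union_Ioc_eq_Ioc hab hbc,
    Finset.sum_union (Finset.Ioc_disjoint_Ioc_of_le le_rfl)]

section Energy

variable {V : X d → ℝ} {ω : ℤ → Bool} {M₀ M₁ : ℝ}

lemma Phi_add (γ : ℤ → X d) {a b c : ℤ} (hab : a ≤ b) (hbc : b ≤ c) :
    Phi V ω a c γ = Phi V ω a b γ + Phi V ω b c γ :=
  sum_Icc_add_one_consecutive _ hab hbc

lemma Phi_congr {a b : ℤ} {γ δ : ℤ → X d} (h : ∀ n, a < n → n ≤ b → γ n = δ n) :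
    Phi V ω a b γ = Phi V ω a b δ :=
  Finset.sum_congr rfl fun n hn => by
    rw [Finset.mem_Icc] at hn
    rw [h n (by omega) hn.2]

lemma Phi_le_of_ne_gstar (hM₀ : 0 ≤ M₀) (hM₁ : 0 ≤ M₁) (hV0 : V 0 = M₀)
    (hV1 : ∀ x : X d, x ≠ 0 → |V x| ≤ M₁) {a : ℤ} {k : ℕ} {γ : ℤ → X d}
    (hγ : ∀ n, a < n → n ≤ a + k → γ n ≠ gstar d ω n) :
    Phi V ω a (a + k) γ ≤ k * M₁ := by
  have hterm : ∀ n ∈ Finset.Icc (a + 1) (a + k), V (γ n) * sgn (ω n) ≤ M₁ := fun n hn => by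
    rw [Finset.mem_Icc] at hn
    have hne := hγ n (by omega) hn.2
    cases hω : ω n with
    | true =>
      have hγ0 : γ n ≠ 0 := by simpa [gstar, hω] using hne
      simpa [sgn] using (le_abs_self _).trans (hV1 _ hγ0)
    | false =>
      by_cases hγ0 : γ n = 0
      · simpa [sgn, hγ0, hV0] using (by linarith : -M₀ ≤ M₁)
      · simpa [sgn] using (neg_le_abs _).trans (hV1 _ hγ0)
  simpa [Phi, Int.card_Icc] using Finset.sum_le_card_nsmul _ _ _ hterm

lemma sum_xi_le_Phi_gstar (hd : 1 ≤ d) (hV0 : V 0 = M₀) (hV1 : ∀ x : X d, x ≠ 0 → |V x| ≤ M₁)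
    (a b : ℤ) : ∑ n ∈ Finset.Icc (a + 1) b, xi M₀ M₁ ω n ≤ Phi V ω a b (gstar d ω) := by
  refine Finset.sum_le_sum fun n _ => ?_
  cases hω : ω n with
  | true => simp [xi, sgn, gstar, hω, hV0]
  | false =>
    have he1 : e1 d ≠ 0 := fun h => by simpa [e1] using congrFun h ⟨0, hd⟩
    simpa [xi, sgn, gstar, hω] using (le_abs_self _).trans (hV1 _ he1)

lemma sum_xi_sub_le_Phi (hM₀ : 0 ≤ M₀) (hM₁ : 0 ≤ M₁) (hV0 : V 0 = M₀)
    (hV1 : ∀ x : X d, x ≠ 0 → |V x| ≤ M₁) (a : ℤ) (k : ℕ) (γ : ℤ → X d) :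
    ∑ n ∈ Finset.Icc (a + 1) (a + k), xi M₀ M₁ ω n - k * (M₀ + M₁) ≤ Phi V ω a (a + k) γ := by
  have hterm : ∀ n ∈ Finset.Icc (a + 1) (a + k),
      xi M₀ M₁ ω n - (M₀ + M₁) ≤ V (γ n) * sgn (ω n) := fun n _ => by
    have hV : -M₁ ≤ V (γ n) ∧ V (γ n) ≤ M₀ + M₁ := by
      by_cases hγ0 : γ n = 0
      · rw [hγ0, hV0]
        constructor <;> linarith
      · have := abs_le.1 (hV1 _ hγ0)
        constructor <;> linarith
    rw [xi, sgn]
    split_ifs <;> linarith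
  have := Finset.sum_le_sum hterm
  simp only [Finset.sum_sub_distrib, Finset.sum_const, Int.card_Icc, nsmul_eq_mul] at this
  simpa [Phi] using this

lemma Good.sum_xi_ge {lam : ℝ} {r : ℕ} {m₁ m₂ : ℤ} (hG : Good d M₀ M₁ lam r m₁ m₂ ω) (j : ℕ) :
    r * M₀ + j * (M₁ + lam + Real.log (2 * d + 1)) ≤
      ∑ n ∈ Finset.Icc (m₁ + 1) (m₁ + r + j), xi M₀ M₁ ω n := by
  rw [sum_Icc_add_one_consecutive _ (by omega : m₁ ≤ m₁ + r) (by omega)]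
  have hones : ∑ n ∈ Finset.Icc (m₁ + 1) (m₁ + r), xi M₀ M₁ ω n = r * M₀ := by
    rw [Finset.sum_congr rfl (g := fun _ => M₀) fun n hn => ?_]
    · simp [Int.card_Icc]
    · rw [Finset.mem_Icc] at hn
      simp [xi, hG.2.1 n hn.1 hn.2]
  rcases Nat.eq_zero_or_pos j with rfl | hj
  · simp [hones]
  · linarith [hG.2.2.1 j hj]

end Energy

lemma l1_e1 : l1 (e1 d) ≤ 1 := by
  have h : ∀ i : Fin d, (e1 d i).natAbs = if (i : ℕ) = 0 then 1 else 0 := fun i => by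
    by_cases hi : (i : ℕ) = 0 <;> simp [e1, hi]
  simp only [l1, h, Finset.sum_boole, Nat.cast_id]
  exact Finset.card_le_one.2 fun i hi j hj => Fin.ext (by
    simp only [Finset.mem_filter, Finset.mem_univ, true_and] at hi hj
    omega)

lemma gstar_eq_zero_or_e1 (ω : ℤ → Bool) (n : ℤ) : gstar d ω n = 0 ∨ gstar d ω n = e1 d := by
  unfold gstar
  split <;> simp

lemma stepOK_of_eq_zero_or_e1 {u v : X d} (hu : u = 0 ∨ u = e1 d) (hv : v = 0 ∨ v = e1 d) :
    stepOK u v := by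
  rcases hu with rfl | rfl <;> rcases hv with rfl | rfl <;>
    simp [stepOK_iff, l1_zero, l1_neg, l1_e1]

lemma exists_path_from_zero (y : X d) : ∃ p : ℕ → X d,
    p 0 = 0 ∧ (∀ k, stepOK (p k) (p (k + 1))) ∧ ∀ k, l1 y ≤ k → p k = y := by
  classical
  induction hn : l1 y generalizing y with
  | zero =>
    have hy : y = 0 := funext (by simpa [l1, Finset.sum_eq_zero_iff] using hn)
    exact ⟨fun _ => 0, rfl, fun _ => by simp [stepOK_iff, l1_zero], fun _ _ => hy.symm⟩
  | succ n ih =>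
    obtain ⟨i, hi⟩ : ∃ i, y i ≠ 0 := by
      by_contra! h
      simp [l1, h] at hn
    set u : X d := Pi.single i (y i).sign
    have hu : l1 u = 1 := by
      have hu_apply : ∀ j, (u j).natAbs = if j = i then 1 else 0 := fun j => by
        by_cases hj : j = i
        · subst hj
          simp [u, Int.natAbs_sign_of_ne_zero hi]
        · simp [u, hj]
      simp [l1, hu_apply]
    have hcoord : ∀ j, ((y - u) j).natAbs + (u j).natAbs = (y j).natAbs := fun j => by
      by_cases hj : j = i
      · subst hj
        simp only [u, Pi.sub_apply, Pi.single_eq_same]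
        rcases lt_or_gt_of_ne hi with h | h
        · rw [Int.sign_eq_neg_one_of_neg h]
          omega
        · rw [Int.sign_eq_one_of_pos h]
          omega
      · simp [u, hj]
    have hl1 : l1 (y - u) = n := by
      have := Finset.sum_congr rfl fun j (_ : j ∈ Finset.univ) => hcoord j
      rw [Finset.sum_add_distrib] at this
      simp only [l1] at hu hn ⊢
      omega
    obtain ⟨p, hp0, hpstep, hpy⟩ := ih (y - u) hl1
    refine ⟨fun k => if k ≤ n then p k else y, by simp [hp0], fun k => ?_, fun k hk => ?_⟩
    · rcases lt_trichotomy k n with hk | rfl | hk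
      · simpa [hk.le, Nat.succ_le_of_lt hk] using hpstep k
      · simp [hpy k le_rfl, stepOK_iff, hu]
      · simp [show ¬ k ≤ n by omega, show ¬ k + 1 ≤ n by omega, stepOK_iff, l1_zero]
    · simp [show ¬ k ≤ n by omega]

section Splice

variable {ω : ℤ → Bool} {m₁ m₂ s : ℤ} {γ : ℤ → X d}

def splice (ω : ℤ → Bool) (m₁ s : ℤ) (γ : ℤ → X d) : ℤ → X d :=
  fun n => if n ≤ m₁ then 0 else if n ≤ s then gstar d ω n else γ n

lemma splice_of_le_left {n : ℤ} (h : n ≤ m₁) : splice ω m₁ s γ n = 0 := if_pos h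

lemma splice_of_mem {n : ℤ} (h₁ : m₁ < n) (h₂ : n ≤ s) : splice ω m₁ s γ n = gstar d ω n := by
  simp [splice, h₂, not_le.2 h₁]

lemma splice_of_lt (hs : m₁ ≤ s) {n : ℤ} (h : s < n) : splice ω m₁ s γ n = γ n := by
  simp [splice, show ¬ n ≤ m₁ by omega, not_le.2 h]

lemma splice_mem (hs : m₁ ≤ s) (hs₂ : s < m₂) (hγs : γ (s + 1) = 0 ∨ γ (s + 1) = e1 d)
    (hA : Adm (s + 1) m₂ γ) {y : X d} (hy : ∀ n, m₂ ≤ n → γ n = y) :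
    Adm m₁ m₂ (splice ω m₁ s γ) ∧ Frozen m₁ m₂ (splice ω m₁ s γ) ∧
      splice ω m₁ s γ m₁ = 0 ∧ splice ω m₁ s γ m₂ = y := by
  have hlow : ∀ n ≤ s, splice ω m₁ s γ n = 0 ∨ splice ω m₁ s γ n = e1 d := fun n hn => by
    rcases le_or_gt n m₁ with h | h
    · exact Or.inl (splice_of_le_left h)
    · rw [splice_of_mem h hn]
      exact gstar_eq_zero_or_e1 ω n
  refine ⟨fun n h₁ h₂ => ?_, ⟨fun n hn => ?_, fun n hn => ?_⟩, splice_of_le_left le_rfl, ?_⟩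
  · rcases lt_trichotomy n s with h | rfl | h
    · exact stepOK_of_eq_zero_or_e1 (hlow n h.le) (hlow (n + 1) h)
    · rw [splice_of_lt hs (lt_add_one n)]
      exact stepOK_of_eq_zero_or_e1 (hlow n le_rfl) hγs
    · rw [splice_of_lt hs h, splice_of_lt hs (by omega)]
      exact hA n h h₂
  · rw [splice_of_le_left hn, splice_of_le_left le_rfl]
  · rw [splice_of_lt hs (by omega), splice_of_lt hs hs₂, hy n hn, hy m₂ le_rfl]
  · rw [splice_of_lt hs hs₂, hy m₂ le_rfl]

lemma Phi_splice {V : X d → ℝ} (hs : m₁ ≤ s) (hs₂ : s ≤ m₂) :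
    Phi V ω m₁ m₂ (splice ω m₁ s γ) = Phi V ω m₁ s (gstar d ω) + Phi V ω s m₂ γ := by
  rw [Phi_add _ hs hs₂, Phi_congr fun n h₁ h₂ => splice_of_mem h₁ h₂,
    Phi_congr fun n h₁ _ => splice_of_lt hs h₁]

end Splice

def MeetsAt (ω : ℤ → Bool) (m₁ m₂ : ℤ) (γ : ℤ → X d) (k : ℕ) : Prop :=
  m₁ + k < m₂ ∧ γ (m₁ + k + 1) = gstar d ω (m₁ + k + 1)

lemma ne_gstar_of_forall_not_meetsAt {ω : ℤ → Bool} {m₁ m₂ : ℤ} {γ : ℤ → X d} {k : ℕ}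
    (hk : m₁ + k ≤ m₂) (h : ∀ i < k, ¬ MeetsAt ω m₁ m₂ γ i) :
    ∀ n, m₁ < n → n ≤ m₁ + k → γ n ≠ gstar d ω n := fun n h₁ h₂ hn =>
  h (n - m₁ - 1).toNat (by omega) ⟨by omega, by rwa [show m₁ + (n - m₁ - 1).toNat + 1 = n by omega]⟩

lemma Good.le_of_meetsAt {M₀ M₁ lam : ℝ} {r : ℕ} {m₁ m₂ : ℤ} {ω : ℤ → Bool} {γ : ℤ → X d}
    (hG : Good d M₀ M₁ lam r m₁ m₂ ω) (hA : Adm m₁ m₂ γ) (hγ : r < nm (γ m₁)) {k : ℕ}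
    (hk : MeetsAt ω m₁ m₂ γ k) : r ≤ k := by
  by_contra! hkr
  obtain ⟨hk₂, hmeet⟩ := hk
  have hzero : γ (m₁ + k + 1) = 0 := by
    rw [hmeet, gstar, if_pos (hG.2.1 _ (by omega) (by omega))]
  have hdist := hA.l1_sub_le le_rfl (m₁ + k + 1) (by omega) (by omega)
  rw [hzero, zero_sub, l1_neg] at hdist
  have := nm_le_l1 (γ m₁)
  omega

abbrev OutPaths (r : ℕ) (m₁ m₂ : ℤ) (y : X d) : Type :=
  Σ x : {x : X d // r < nm x}, Paths m₁ m₂ x.1 y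

lemma OutPaths.ext {r : ℕ} {m₁ m₂ : ℤ} {y : X d} {s t : OutPaths r m₁ m₂ y}
    (h : s.2.1 = t.2.1) : s = t := by
  obtain ⟨⟨x, hx⟩, γ, hγ⟩ := s
  obtain ⟨⟨x', hx'⟩, γ', hγ'⟩ := t
  obtain rfl : γ = γ' := h
  obtain rfl : x = x' := hγ.2.2.1.symm.trans hγ'.2.2.1
  rfl

lemma tsum_le_tsum_never_add_tsum_first {ι : Type*} (w : ι → ℝ≥0∞) (P : ι → ℕ → Prop)
    {r : ℕ} (hr : ∀ i k, P i k → r ≤ k) :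
    ∑' i, w i ≤ ∑' i : {i // ∀ k, ¬ P i k}, w i +
      ∑' j : ℕ, ∑' i : {i // P i (r + j) ∧ ∀ k < r + j, ¬ P i k}, w i := by
  classical
  have h₀ : ∑' i : {i // ∀ k, ¬ P i k}, w i = ∑' i, {i | ∀ k, ¬ P i k}.indicator w i :=
    tsum_subtype _ w
  have h₁ : ∀ j, ∑' i : {i // P i (r + j) ∧ ∀ k < r + j, ¬ P i k}, w i =
      ∑' i, {i | P i (r + j) ∧ ∀ k < r + j, ¬ P i k}.indicator w i := fun j =>
    tsum_subtype _ w
  rw [h₀, tsum_congr h₁, ENNReal.tsum_comm, ← ENNReal.tsum_add]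
  refine ENNReal.tsum_le_tsum fun i => ?_
  by_cases h : ∃ k, P i k
  · have hr' := hr i _ (Nat.find_spec h)
    refine le_add_left (le_trans ?_ (ENNReal.le_tsum (Nat.find h - r)))
    rw [Set.indicator_of_mem]
    exact ⟨by rw [Nat.add_sub_cancel' hr']; exact Nat.find_spec h,
      fun k hk => Nat.find_min h (by omega)⟩
  · exact le_add_right
      (Set.indicator_of_mem (show i ∈ {i | ∀ k, ¬ P i k} from fun k hk => h ⟨k, hk⟩) w).ge

section Fibres

variable {V : X d → ℝ} {ω : ℤ → Bool} {M₀ M₁ : ℝ} {r : ℕ} {m₁ m₂ : ℤ} {y : X d}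

lemma splice_mem_of_meetsAt {x : X d} (γ : Paths m₁ m₂ x y) {k : ℕ}
    (h : MeetsAt ω m₁ m₂ γ.1 k) :
    Adm m₁ m₂ (splice ω m₁ (m₁ + k) γ.1) ∧ Frozen m₁ m₂ (splice ω m₁ (m₁ + k) γ.1) ∧
      splice ω m₁ (m₁ + k) γ.1 m₁ = 0 ∧ splice ω m₁ (m₁ + k) γ.1 m₂ = y := by
  obtain ⟨hA, hF, -, hy⟩ := γ.2
  refine splice_mem (by omega) h.1 (h.2 ▸ gstar_eq_zero_or_e1 ω _)
    (fun n h₁ h₂ => hA n (by omega) h₂) fun n hn => ?_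
  rw [hF.2 n hn, hy]

lemma tsum_firstMeet_le (hd : 1 ≤ d) (hM₀ : 0 ≤ M₀) (hM₁ : 0 ≤ M₁) (hV0 : V 0 = M₀)
    (hV1 : ∀ x : X d, x ≠ 0 → |V x| ≤ M₁) (k : ℕ) :
    ∑' s : {s : OutPaths r m₁ m₂ y //
        MeetsAt ω m₁ m₂ s.2.1 k ∧ ∀ i < k, ¬ MeetsAt ω m₁ m₂ s.2.1 i},
      weight V ω m₁ m₂ s.1.2.1 ≤
    ENNReal.ofReal ((2 * d + 1) ^ (k + 1) *
      Real.exp (k * M₁ - ∑ n ∈ Finset.Icc (m₁ + 1) (m₁ + k), xi M₀ M₁ ω n) *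
        Z V ω m₁ m₂ 0 y) := by
  refine tsum_le_mul_Z_of_injective
    (fun s => (⟨_, splice_mem_of_meetsAt s.1.2 s.2.1⟩, stepCodes s.1.2.1 m₁ (k + 1)))
    (fun s t hst => ?_) fun s => weight_le_of_Phi_le ?_
  · obtain ⟨hsplice, hcode⟩ := Prod.ext_iff.1 hst
    obtain ⟨hAs, hFs, -⟩ := s.1.2.2
    obtain ⟨hAt, hFt, -⟩ := t.1.2.2
    have hk := s.2.1.1
    refine Subtype.ext (OutPaths.ext (eq_of_stepCodes_eq hFs.1 hFt.1
      (fun n h₁ h₂ => hAs n h₁ (by omega)) (fun n h₁ h₂ => hAt n h₁ (by omega)) hcode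
      fun n hn => ?_))
    have := congrFun (congrArg Subtype.val hsplice) n
    simp only at this
    rwa [splice_of_lt (by omega) (by omega), splice_of_lt (by omega) (by omega)] at this
  · obtain ⟨hk, -⟩ := s.2.1
    have hbefore := Phi_le_of_ne_gstar hM₀ hM₁ hV0 hV1
      (ne_gstar_of_forall_not_meetsAt hk.le s.2.2)
    have hgain := sum_xi_le_Phi_gstar (ω := ω) hd hV0 hV1 m₁ (m₁ + k)
    rw [Phi_splice (by omega) hk.le, Phi_add _ (by omega : m₁ ≤ m₁ + k) hk.le]
    linarith

lemma tsum_neverMeet_le (hd : 1 ≤ d) (hM₀ : 0 ≤ M₀) (hM₁ : 0 ≤ M₁) (hV0 : V 0 = M₀)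
    (hV1 : ∀ x : X d, x ≠ 0 → |V x| ≤ M₁) {N : ℕ} (hN : l1 y < N) :
    ∑' s : {s : OutPaths r m₁ (m₁ + N) y // ∀ k, ¬ MeetsAt ω m₁ (m₁ + N) s.2.1 k},
      weight V ω m₁ (m₁ + N) s.1.2.1 ≤
    ENNReal.ofReal ((2 * d + 1) ^ N *
      Real.exp (N * M₁ - ∑ n ∈ Finset.Icc (m₁ + 1) (m₁ + N), xi M₀ M₁ ω n +
        (l1 y + 1) * (M₀ + M₁)) * Z V ω m₁ (m₁ + N) 0 y) := by
  obtain ⟨p, hp0, hpstep, hpy⟩ := exists_path_from_zero y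
  set s₀ : ℤ := m₁ + N - l1 y - 1
  set walk : ℤ → X d := fun n => p (n - s₀ - 1).toNat
  have hwalk := splice_mem (ω := ω) (γ := walk) (m₂ := m₁ + N) (show m₁ ≤ s₀ by omega)
    (by omega) (by simp [walk, hp0]) (fun n h₁ _ => by
      show stepOK (p (n - s₀ - 1).toNat) (p (n + 1 - s₀ - 1).toNat)
      rw [show (n + 1 - s₀ - 1).toNat = (n - s₀ - 1).toNat + 1 by omega]
      exact hpstep _)
    fun n hn => hpy _ (by omega)
  refine tsum_le_mul_Z_of_injective (fun s => (⟨_, hwalk⟩, stepCodes s.1.2.1 m₁ N))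
    (fun s t hst => ?_) fun s => weight_le_of_Phi_le ?_
  · obtain ⟨hAs, hFs, -, hys⟩ := s.1.2.2
    obtain ⟨hAt, hFt, -, hyt⟩ := t.1.2.2
    refine Subtype.ext (OutPaths.ext (eq_of_stepCodes_eq hFs.1 hFt.1 hAs hAt
      (Prod.ext_iff.1 hst).2 fun n hn => ?_))
    rw [hFs.2 n hn, hFt.2 n hn, hys, hyt]
  · have hbefore := Phi_le_of_ne_gstar hM₀ hM₁ hV0 hV1
      (ne_gstar_of_forall_not_meetsAt le_rfl fun i _ => s.2 i)
    have hgain := sum_xi_le_Phi_gstar (ω := ω) hd hV0 hV1 m₁ s₀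
    have hend : m₁ + N = s₀ + ((l1 y + 1 : ℕ) : ℤ) := by push_cast; omega
    have hwalk_gain := sum_xi_sub_le_Phi (ω := ω) hM₀ hM₁ hV0 hV1 s₀ (l1 y + 1) walk
    rw [← hend] at hwalk_gain
    rw [Phi_splice (by omega) (by omega),
      sum_Icc_add_one_consecutive _ (by omega : m₁ ≤ s₀) (by omega : s₀ ≤ m₁ + N)]
    push_cast at hwalk_gain
    linarith

end Fibres

lemma two_mul_add_one_pow_mul_exp (n : ℕ) (a : ℝ) :
    (2 * d + 1 : ℝ) ^ n * Real.exp a = Real.exp (n * Real.log (2 * d + 1) + a) := by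
  rw [Real.exp_add, Real.exp_nat_mul, Real.exp_log (by positivity)]

section Coefficients

variable {ω : ℤ → Bool} {M₀ M₁ lam : ℝ} {r : ℕ} {m₁ m₂ : ℤ}

lemma Good.neverMeet_coeff_le (hG : Good d M₀ M₁ lam r m₁ m₂ ω) {N : ℕ} {c : ℝ} (hN : r ≤ N)
    (hc : c ≤ (N - r) * lam) :
    (2 * d + 1 : ℝ) ^ N * Real.exp (N * M₁ -
      ∑ n ∈ Finset.Icc (m₁ + 1) (m₁ + N), xi M₀ M₁ ω n + c) ≤
      Real.exp (r * (Real.log (2 * d + 1) + M₁ - M₀)) := by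
  have hsum := hG.sum_xi_ge (N - r)
  rw [show m₁ + r + ((N - r : ℕ) : ℤ) = m₁ + N by omega, Nat.cast_sub hN] at hsum
  rw [two_mul_add_one_pow_mul_exp]
  exact Real.exp_le_exp.2 (by nlinarith)

lemma Good.firstMeet_coeff_le (hG : Good d M₀ M₁ lam r m₁ m₂ ω) (j : ℕ) :
    (2 * d + 1 : ℝ) ^ (r + j + 1) * Real.exp ((r + j : ℕ) * M₁ -
      ∑ n ∈ Finset.Icc (m₁ + 1) (m₁ + (r + j : ℕ)), xi M₀ M₁ ω n) ≤
      (2 * d + 1) * Real.exp (r * (Real.log (2 * d + 1) + M₁ - M₀)) * Real.exp (-lam) ^ j := by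
  set L := Real.log (2 * d + 1)
  have hsum := hG.sum_xi_ge j
  have hE : (2 * d + 1 : ℝ) * Real.exp (r * (L + M₁ - M₀)) * Real.exp (-lam) ^ j =
      Real.exp (L + r * (L + M₁ - M₀) + j * (-lam)) := by
    rw [Real.exp_add, Real.exp_add, Real.exp_nat_mul (-lam) j, Real.exp_log (by positivity)]
  rw [two_mul_add_one_pow_mul_exp, hE, show m₁ + ((r + j : ℕ) : ℤ) = m₁ + r + j by push_cast; ring]
  push_cast
  exact Real.exp_le_exp.2 (by nlinarith)

end Coefficients

theorem tsum_ofReal_Z_le {V : X d → ℝ} {ω : ℤ → Bool} {M₀ M₁ lam : ℝ} {r N : ℕ} {m₁ : ℤ}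
    {y : X d} (hd : 1 ≤ d) (hM₀ : 0 ≤ M₀) (hM₁ : 0 ≤ M₁) (hlam : 0 < lam) (hV0 : V 0 = M₀)
    (hV1 : ∀ x : X d, x ≠ 0 → |V x| ≤ M₁) (hG : Good d M₀ M₁ lam r m₁ (m₁ + N) ω)
    (hN : r + l1 y < N) (hcost : (l1 y + 1) * (M₀ + M₁) ≤ (N - r) * lam) :
    ∑' x : {x : X d // r < nm x}, ENNReal.ofReal (Z V ω m₁ (m₁ + N) x.1 y) ≤
      ENNReal.ofReal (((2 * d + 1) / (1 - Real.exp (-lam)) + 1) *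
        Real.exp (r * (Real.log (2 * d + 1) + M₁ - M₀)) * Z V ω m₁ (m₁ + N) 0 y) := by
  set E := Real.exp (r * (Real.log (2 * d + 1) + M₁ - M₀))
  set Z₀ := Z V ω m₁ (m₁ + N) 0 y
  have hZ₀ : 0 ≤ Z₀ := tsum_nonneg fun _ => (Real.exp_pos _).le
  have hq : Real.exp (-lam) < 1 := Real.exp_lt_one_iff.2 (by linarith)
  have hgeom : ∑' j : ℕ, ENNReal.ofReal ((2 * d + 1) * E * Real.exp (-lam) ^ j * Z₀) =
      ENNReal.ofReal ((2 * d + 1) / (1 - Real.exp (-lam)) * E * Z₀) := by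
    rw [← ENNReal.ofReal_tsum_of_nonneg (fun j => by positivity)
      (((summable_geometric_of_lt_one (by positivity) hq).mul_left _).mul_right _),
      tsum_mul_right, tsum_mul_left, tsum_geometric_of_lt_one (by positivity) hq]
    congr 1
    ring
  simp only [ofReal_Z]
  rw [← ENNReal.tsum_sigma' fun s : OutPaths r m₁ (m₁ + N) y => weight V ω m₁ (m₁ + N) s.2.1]
  refine (tsum_le_tsum_never_add_tsum_first _ (fun s => MeetsAt ω m₁ (m₁ + N) s.2.1)
    fun s k hk => hG.le_of_meetsAt s.2.2.1 (by rw [s.2.2.2.2.1]; exact s.1.2) hk).trans ?_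
  refine (add_le_add (tsum_neverMeet_le hd hM₀ hM₁ hV0 hV1 (by omega))
    (ENNReal.tsum_le_tsum fun j => tsum_firstMeet_le hd hM₀ hM₁ hV0 hV1 (r + j))).trans ?_
  refine (add_le_add (ENNReal.ofReal_le_ofReal (mul_le_mul_of_nonneg_right
      (hG.neverMeet_coeff_le (by omega) hcost) hZ₀))
    (ENNReal.tsum_le_tsum fun j => ENNReal.ofReal_le_ofReal
      (mul_le_mul_of_nonneg_right (hG.firstMeet_coeff_le j) hZ₀))).trans ?_
  rw [hgeom, ← ENNReal.ofReal_add (by positivity) (by positivity)]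
  exact ENNReal.ofReal_le_ofReal (le_of_eq (by ring))

theorem tsum_Z_le {V : X d → ℝ} {ω : ℤ → Bool} {M₀ M₁ lam : ℝ} {r N : ℕ} {m₁ : ℤ}
    {y : X d} (hd : 1 ≤ d) (hM₀ : 0 ≤ M₀) (hM₁ : 0 ≤ M₁) (hlam : 0 < lam) (hV0 : V 0 = M₀)
    (hV1 : ∀ x : X d, x ≠ 0 → |V x| ≤ M₁) (hG : Good d M₀ M₁ lam r m₁ (m₁ + N) ω)
    (hN : r + l1 y < N) (hcost : (l1 y + 1) * (M₀ + M₁) ≤ (N - r) * lam) :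
    ∑' x : {x : X d // r < nm x}, Z V ω m₁ (m₁ + N) x.1 y ≤
      ((2 * d + 1) / (1 - Real.exp (-lam)) + 1) *
        Real.exp (r * (Real.log (2 * d + 1) + M₁ - M₀)) * Z V ω m₁ (m₁ + N) 0 y := by
  have hZ : ∀ x, 0 ≤ Z V ω m₁ (m₁ + N) x y := fun _ => tsum_nonneg fun _ => (Real.exp_pos _).le
  have hq : 0 < 1 - Real.exp (-lam) := by linarith [Real.exp_lt_one_iff.2 (by linarith : -lam < 0)]
  calc ∑' x : {x : X d // r < nm x}, Z V ω m₁ (m₁ + N) x.1 y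
      = (∑' x : {x : X d // r < nm x}, ENNReal.ofReal (Z V ω m₁ (m₁ + N) x.1 y)).toReal := by
        rw [ENNReal.tsum_toReal_eq fun _ => ENNReal.ofReal_ne_top]
        simp only [ENNReal.toReal_ofReal (hZ _)]
    _ ≤ _ := ENNReal.toReal_le_of_le_ofReal (by have := hZ 0; positivity)
        (tsum_ofReal_Z_le hd hM₀ hM₁ hlam hV0 hV1 hG hN hcost)

end Development

theorem statement8_general
    (d : ℕ) (hd : 1 ≤ d) (M₀ M₁ : ℝ) (hM₀ : 0 ≤ M₀) (hM₁ : 0 ≤ M₁)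
    (lam : ℝ) (hlam : 0 < lam) :
    ∃ K₇ : ℝ, 0 < K₇ ∧ ∀ r : ℕ, ∃ S : ℕ,
      ∀ (V : X d → ℝ), V 0 = M₀ → (∀ x : X d, x ≠ 0 → |V x| ≤ M₁) →
      ∀ (ω : ℤ → Bool) (m₁ m₂ : ℤ),
        Good d M₀ M₁ lam r m₁ m₂ ω → (S : ℤ) < m₂ - m₁ →
        ∀ y : X d, nm y ≤ r →
          (∑' x : {x : X d // r < nm x}, Z V ω m₁ m₂ x.1 y) ≤
            K₇ * Real.exp (-2 * ((M₀ - 3 * M₁) / 2 - Real.log (2 * (d : ℝ) + 1)) * r) *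
              Z V ω m₁ m₂ 0 y := by
  have hK : 0 < (2 * d + 1 : ℝ) / (1 - Real.exp (-lam)) + 1 := add_pos_of_nonneg_of_pos
    (div_nonneg (by positivity) (by linarith [Real.exp_lt_one_iff.2 (by linarith : -lam < 0)]))
    one_pos
  refine ⟨_, hK, fun r => ⟨r + d * r + ⌈(d * r + 1) * (M₀ + M₁) / lam⌉₊, ?_⟩⟩
  intro V hV0 hV1 ω m₁ m₂ hG hS y hy
  obtain ⟨N, rfl⟩ : ∃ N : ℕ, m₂ = m₁ + N := ⟨(m₂ - m₁).toNat, by omega⟩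
  have hly : l1 y ≤ d * r := (l1_le_mul_nm y).trans (Nat.mul_le_mul_left d hy)
  have hS' : r + d * r + ⌈(d * r + 1) * (M₀ + M₁) / lam⌉₊ < N := by omega
  have hcost : (l1 y + 1) * (M₀ + M₁) ≤ (N - r) * lam := by
    have hceil := (div_le_iff₀ hlam).1 (Nat.le_ceil ((d * r + 1) * (M₀ + M₁) / lam))
    have hlyR : (l1 y : ℝ) ≤ d * r := by exact_mod_cast hly
    have hNR : (r + d * r + ⌈(d * r + 1) * (M₀ + M₁) / lam⌉₊ : ℝ) ≤ N := by exact_mod_cast hS'.le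
    nlinarith
  have hL := Real.log_nonneg (by linarith [(Nat.cast_nonneg d : (0 : ℝ) ≤ d)] :
    (1 : ℝ) ≤ 2 * d + 1)
  refine (tsum_Z_le hd hM₀ hM₁ hlam hV0 hV1 hG (by omega) hcost).trans
    (mul_le_mul_of_nonneg_right (mul_le_mul_of_nonneg_left (Real.exp_le_exp.2 ?_) hK.le)
      (tsum_nonneg fun _ => (Real.exp_pos _).le))
  nlinarith [(Nat.cast_nonneg r : (0 : ℝ) ≤ r)]

/-- Lemma 5.2 (influx estimate). -/
theorem statement8
    (d : ℕ) (hd : 1 ≤ d) (M₀ M₁ : ℝ) (hM₀ : 0 ≤ M₀) (hM₁ : 0 ≤ M₁)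
    (hl0 : 0 < (M₀ - 3 * M₁) / 2 - Real.log (2 * (d : ℝ) + 1))
    (lam : ℝ) (hlam : 0 < lam)
    (hlam' : lam < (M₀ - 3 * M₁) / 2 - Real.log (2 * (d : ℝ) + 1)) :
    ∃ K₇ : ℝ, 0 < K₇ ∧ ∀ r : ℕ, ∃ S : ℕ,
      ∀ (V : X d → ℝ), V 0 = M₀ → (∀ x : X d, x ≠ 0 → |V x| ≤ M₁) →
      ∀ (ω : ℤ → Bool) (m₁ m₂ : ℤ),
        Good d M₀ M₁ lam r m₁ m₂ ω → (S : ℤ) < m₂ - m₁ →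
        ∀ y : X d, nm y ≤ r →
          (∑' x : {x : X d // r < nm x}, Z V ω m₁ m₂ x.1 y) ≤
            K₇ * Real.exp (-2 * ((M₀ - 3 * M₁) / 2 - Real.log (2 * (d : ℝ) + 1)) * r) *
              Z V ω m₁ m₂ 0 y :=
  statement8_general d hd M₀ M₁ hM₀ hM₁ lam hlam

end BKpaper
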